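/- (The truncated octahedron is space-filling) Let ℓ > 0. For every ξ ∈ ℝ³ there exists c ∈ L_ℓ such that |ξ_i − c_i| ≤ ℓ/2 for i = 1,2,3 and |ξ_1 − c_1| + |ξ_2 − c_2| + |ξ_3 − c_3| ≤ (3/4)·ℓ; that is, the closures of the cells T(c), c ∈ L_ℓ, cover ℝ³. -/

import Mathlib

/-!
In each coordinate, the distance from `ξᵢ` to the nearest point of `ℓℤ` and the distance to the
nearest point of `ℓℤ + ℓ/2` add up to `ℓ/2`. Rounding every coordinate to `ℓℤ`, respectively to
`ℓℤ + ℓ/2`, gives two points of the lattice whose `ℓ¹`-distances to `ξ` add up to `3ℓ/2`, so the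
nearer of the two is within `3ℓ/4`; both are within `ℓ/2` in every coordinate.
-/

noncomputable section

abbrev V3 := EuclideanSpace ℝ (Fin 3)

/-- The body-centered cubic lattice L_ℓ = {ℓn : n ∈ ℤ³} ∪ {ℓn + (ℓ/2,ℓ/2,ℓ/2) : n ∈ ℤ³}. -/
def latt (ℓ : ℝ) : Set V3 :=
  {c | ∃ n : Fin 3 → ℤ, (∀ i, c i = ℓ * n i) ∨ (∀ i, c i = ℓ * n i + ℓ / 2)}

lemma abs_sub_round_add_abs_sub_floor_add_half (x : ℝ) :
    |x - round x| + |x - (⌊x⌋ + 1 / 2)| = 1 / 2 := by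
  rw [abs_sub_round_eq_min, ← sub_sub, ← Int.fract]
  rcases le_or_gt (Int.fract x) (1 / 2) with h | h
  · rw [min_eq_left (by linarith), abs_of_nonpos (by linarith)]; ring
  · rw [min_eq_right (by linarith), abs_of_pos (by linarith)]; ring

lemma abs_sub_mul_round_add_abs_sub_mul_floor_add_half {ℓ : ℝ} (hℓ : 0 < ℓ) (x : ℝ) :
    |x - ℓ * round (x / ℓ)| + |x - (ℓ * ⌊x / ℓ⌋ + ℓ / 2)| = ℓ / 2 := by
  have hx : x = ℓ * (x / ℓ) := by field_simp
  calc |x - ℓ * round (x / ℓ)| + |x - (ℓ * ⌊x / ℓ⌋ + ℓ / 2)|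
      = |ℓ| * |x / ℓ - round (x / ℓ)| + |ℓ| * |x / ℓ - (⌊x / ℓ⌋ + 1 / 2)| := by
        rw [← abs_mul, ← abs_mul]; congr 2 <;> nth_rewrite 1 [hx] <;> ring
    _ = ℓ / 2 := by
        rw [← mul_add, abs_sub_round_add_abs_sub_floor_add_half, abs_of_pos hℓ]; ring

def roundToCubic (ℓ : ℝ) (ξ : V3) : V3 :=
  WithLp.toLp 2 fun i => ℓ * round (ξ i / ℓ)

def roundToShiftedCubic (ℓ : ℝ) (ξ : V3) : V3 :=
  WithLp.toLp 2 fun i => ℓ * ⌊ξ i / ℓ⌋ + ℓ / 2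

lemma roundToCubic_mem_latt (ℓ : ℝ) (ξ : V3) : roundToCubic ℓ ξ ∈ latt ℓ :=
  ⟨fun i => round (ξ i / ℓ), Or.inl fun _ => rfl⟩

lemma roundToShiftedCubic_mem_latt (ℓ : ℝ) (ξ : V3) : roundToShiftedCubic ℓ ξ ∈ latt ℓ :=
  ⟨fun i => ⌊ξ i / ℓ⌋, Or.inr fun _ => rfl⟩

lemma abs_sub_roundToCubic_add_abs_sub_roundToShiftedCubic {ℓ : ℝ} (hℓ : 0 < ℓ) (ξ : V3)
    (i : Fin 3) : |ξ i - roundToCubic ℓ ξ i| + |ξ i - roundToShiftedCubic ℓ ξ i| = ℓ / 2 :=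
  abs_sub_mul_round_add_abs_sub_mul_floor_add_half hℓ (ξ i)

def truncatedOctahedron (ℓ : ℝ) (c : V3) : Set V3 :=
  {ξ | (∀ i, |ξ i - c i| ≤ ℓ / 2) ∧ |ξ 0 - c 0| + |ξ 1 - c 1| + |ξ 2 - c 2| ≤ 3 / 4 * ℓ}

lemma mem_truncatedOctahedron_or_of_abs_sub_add_abs_sub_eq {ℓ : ℝ} {ξ c c' : V3}
    (h : ∀ i, |ξ i - c i| + |ξ i - c' i| = ℓ / 2) :
    ξ ∈ truncatedOctahedron ℓ c ∨ ξ ∈ truncatedOctahedron ℓ c' := by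
  have hc : ∀ i, |ξ i - c i| ≤ ℓ / 2 := fun i => by linarith [h i, abs_nonneg (ξ i - c' i)]
  have hc' : ∀ i, |ξ i - c' i| ≤ ℓ / 2 := fun i => by linarith [h i, abs_nonneg (ξ i - c i)]
  rcases le_total (|ξ 0 - c 0| + |ξ 1 - c 1| + |ξ 2 - c 2|)
      (|ξ 0 - c' 0| + |ξ 1 - c' 1| + |ξ 2 - c' 2|) with hle | hle
  · exact Or.inl ⟨hc, by linarith [h 0, h 1, h 2]⟩
  · exact Or.inr ⟨hc', by linarith [h 0, h 1, h 2]⟩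

/-- **The truncated octahedron is space-filling:** every point of ℝ³ belongs to the
closure of a cell centered at a lattice point. -/
theorem truncated_octahedron_space_filling
    (ℓ : ℝ) (hℓ : 0 < ℓ) (ξ : V3) :
    ∃ c ∈ latt ℓ, (∀ i, |ξ i - c i| ≤ ℓ / 2) ∧
      |ξ 0 - c 0| + |ξ 1 - c 1| + |ξ 2 - c 2| ≤ (3 / 4) * ℓ := by
  rcases mem_truncatedOctahedron_or_of_abs_sub_add_abs_sub_eq
      (abs_sub_roundToCubic_add_abs_sub_roundToShiftedCubic hℓ ξ) with h | h
  · exact ⟨_, roundToCubic_mem_latt ℓ ξ, h⟩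
  · exact ⟨_, roundToShiftedCubic_mem_latt ℓ ξ, h⟩
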